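/- For every side S of 𝒯 with endpoints A, A′ and every 0 < δ < d_S, define W_S(δ) = {x ∈ ℝ³ : x = ψ_{F,S,A}^{-1}(Φ(y, r, φ)) with y ∈ [δ/4, ℓ_S − δ/4], r ∈ [0, (δ/4)·tan(θ_S/3)], φ ∈ [−π, π)} (with F any face containing S). Then for any two sides S, S′ of 𝒯 and any 0 < δ < d_S, 0 < δ′ < d_{S′}, either S = S′ or W_S(δ) ∩ W_{S′}(δ′) = ∅. Moreover W_S(δ) ⊂ S + B(0, δ/4). -/

import Mathlib

open Set Metric Real
open scoped Classical

noncomputable section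

abbrev E3 := EuclideanSpace ℝ (Fin 3)

/-- A locally finite simplicial complex of 3-simplices on a set `Ω ⊆ ℝ³`. -/
structure SC3 (Ω : Set E3) where
  simplices : Set (Set E3)
  countable : simplices.Countable
  isSimplex : ∀ T ∈ simplices, ∃ v : Fin 4 → E3,
    AffineIndependent ℝ v ∧ T = convexHull ℝ (Set.range v)
  pairwiseDisjointInteriors : simplices.Pairwise fun T T' => interior T ∩ interior T' = ∅
  union_eq : ⋃₀ simplices = Ω
  locallyFinite : ∀ x ∈ Ω, ∃ r > 0, {T | T ∈ simplices ∧ (T ∩ ball x r).Nonempty}.Finite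

variable {Ω : Set E3}

/-- `v` is a vertex representation of a simplex of the complex. -/
def HasVerts (𝒯 : SC3 Ω) (v : Fin 4 → E3) : Prop :=
  AffineIndependent ℝ v ∧ convexHull ℝ (Set.range v) ∈ 𝒯.simplices

/-- `A` is a vertex (0-subsimplex) of the complex. -/
def IsVertex (𝒯 : SC3 Ω) (A : E3) : Prop :=
  ∃ v : Fin 4 → E3, HasVerts 𝒯 v ∧ A ∈ Set.range v

/-- `S` is a side (1-subsimplex) of the complex with endpoints `A`, `A'`. -/
def IsSideWith (𝒯 : SC3 Ω) (A A' : E3) (S : Set E3) : Prop :=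
  ∃ v : Fin 4 → E3, HasVerts 𝒯 v ∧ ∃ i j : Fin 4, i ≠ j ∧ A = v i ∧ A' = v j ∧
    S = segment ℝ A A'

/-- `F` is a face (2-subsimplex) of the complex with vertices `A`, `B`, `P`. -/
def IsFaceWith (𝒯 : SC3 Ω) (A B P : E3) (F : Set E3) : Prop :=
  ∃ v : Fin 4 → E3, HasVerts 𝒯 v ∧ ∃ i j k : Fin 4, i ≠ j ∧ j ≠ k ∧ i ≠ k ∧
    A = v i ∧ B = v j ∧ P = v k ∧ F = convexHull ℝ {A, B, P}

/-- `V` is a subsimplex of the complex. -/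
def IsSubsimplex (𝒯 : SC3 Ω) (V : Set E3) : Prop :=
  ∃ v : Fin 4 → E3, HasVerts 𝒯 v ∧ ∃ s : Finset (Fin 4), s.Nonempty ∧
    V = convexHull ℝ (v '' ↑s)

/-- `d_A`: distance from the vertex `A` to the nearest other vertex. -/
def dA (𝒯 : SC3 Ω) (A : E3) : ℝ :=
  sInf {d | ∃ A', IsVertex 𝒯 A' ∧ A' ≠ A ∧ d = dist A A'}

/-- `θ_A`: minimum of `π/4` and all angles between distinct sides meeting at `A`. -/
def thetaA (𝒯 : SC3 Ω) (A : E3) : ℝ :=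
  sInf ({π/4} ∪ {θ | ∃ B B' S S', IsSideWith 𝒯 A B S ∧ IsSideWith 𝒯 A B' S' ∧ S ≠ S' ∧
    θ = EuclideanGeometry.angle B A B'})

/-- The component of `w` orthogonal to `u`. -/
def perpPart (u w : E3) : E3 := w - ((inner ℝ u w : ℝ) / (inner ℝ u u : ℝ)) • u

/-- Dihedral angle along the segment `[A,A']` between the faces `co{A,A',B}` and `co{A,A',B'}`. -/
def dihedral (A A' B B' : E3) : ℝ :=
  InnerProductGeometry.angle (perpPart (A' - A) (B - A)) (perpPart (A' - A) (B' - A))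

/-- `ω_S`: minimum of `π/4` and all dihedral angles at `S` between distinct faces containing `S`. -/
def omegaS (𝒯 : SC3 Ω) (S : Set E3) : ℝ :=
  sInf ({π/4} ∪ {ω | ∃ A A' B B' F F', S = segment ℝ A A' ∧
    IsFaceWith 𝒯 A A' B F ∧ IsFaceWith 𝒯 A A' B' F' ∧ F ≠ F' ∧ ω = dihedral A A' B B'})

/-- Distance between two sets. -/
def setDist (s t : Set E3) : ℝ := sInf {d | ∃ x ∈ s, ∃ y ∈ t, d = dist x y}

/-- `𝒯_S`: the union of all sides of the complex sharing no endpoint with the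
side with endpoints `A`, `A'`. -/
def TS (𝒯 : SC3 Ω) (A A' : E3) : Set E3 :=
  ⋃₀ {S' | ∃ B B', IsSideWith 𝒯 B B' S' ∧ B ≠ A ∧ B ≠ A' ∧ B' ≠ A ∧ B' ≠ A'}

/-- `d_S` for the side `S` with endpoints `A`, `A'`. -/
def dS (𝒯 : SC3 Ω) (A A' : E3) (S : Set E3) : ℝ :=
  min (min (dA 𝒯 A) (dA 𝒯 A')) (setDist S (TS 𝒯 A A'))

/-- `θ_S` for a side with endpoints `A`, `A'`. -/
def thetaS (𝒯 : SC3 Ω) (A A' : E3) : ℝ :=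
  min (min (thetaA 𝒯 A) (thetaA 𝒯 A')) (π/4)

/-- `𝒯_F`: the union of all faces of the complex sharing no side with the face
with vertices `A`, `B`, `P`. -/
def TF (𝒯 : SC3 Ω) (A B P : E3) : Set E3 :=
  ⋃₀ {F' | ∃ A' B' P', IsFaceWith 𝒯 A' B' P' F' ∧
    ({segment ℝ A' B', segment ℝ B' P', segment ℝ A' P'} ∩
      ({segment ℝ A B, segment ℝ B P, segment ℝ A P} : Set (Set E3)) = ∅)}

/-- `d_F` for the face `F` with vertices `A`, `B`, `P`. -/
def dF (𝒯 : SC3 Ω) (A B P : E3) (F : Set E3) : ℝ :=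
  min (min (min (dS 𝒯 A B (segment ℝ A B)) (dS 𝒯 B P (segment ℝ B P)))
    (dS 𝒯 A P (segment ℝ A P))) (setDist F (TF 𝒯 A B P))

/-- `ω_F` for the face with vertices `A`, `B`, `P`. -/
def omegaF (𝒯 : SC3 Ω) (A B P : E3) : ℝ :=
  min (min (min (omegaS 𝒯 (segment ℝ A B)) (omegaS 𝒯 (segment ℝ B P)))
      (omegaS 𝒯 (segment ℝ A P)))
    (min (min (thetaA 𝒯 A) (thetaA 𝒯 B)) (thetaA 𝒯 P))

/-- `ψ` is an admissible rigid motion for vertex `A` of side `S` of face `F`: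
it maps `A` to the origin, `S` into the nonnegative `x₁`-axis and `F` into the
quadrant `{x₁ ≥ 0, x₂ ≥ 0, x₃ = 0}`. -/
def IsPsi (A : E3) (S F : Set E3) (ψ : E3 ≃ᵢ E3) : Prop :=
  ψ A = 0 ∧ (∀ x ∈ S, ψ x 1 = 0 ∧ ψ x 2 = 0 ∧ 0 ≤ ψ x 0) ∧
    (∀ x ∈ F, ψ x 2 = 0 ∧ 0 ≤ ψ x 0 ∧ 0 ≤ ψ x 1)

/-- Cylindrical coordinates `Φ(y, r, φ) = (y, r cos φ, r sin φ)`. -/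
def Phi (y r φ : ℝ) : E3 :=
  (EuclideanSpace.equiv (Fin 3) ℝ).symm ![y, r * Real.cos φ, r * Real.sin φ]

/-- The `y` cylindrical coordinate of `ψ x`. -/
def ycoord (ψ : E3 ≃ᵢ E3) (x : E3) : ℝ := ψ x 0

/-- The `r` cylindrical coordinate of `ψ x`. -/
def rcoord (ψ : E3 ≃ᵢ E3) (x : E3) : ℝ := Real.sqrt ((ψ x 1) ^ 2 + (ψ x 2) ^ 2)

/-- The `φ ∈ [-π, π)` cylindrical coordinate of `ψ x`. -/
def phicoord (ψ : E3 ≃ᵢ E3) (x : E3) : ℝ :=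
  if Complex.arg ⟨ψ x 1, ψ x 2⟩ = π then -π else Complex.arg ⟨ψ x 1, ψ x 2⟩

/-- The function `g_δ`. -/
def gfun (δ x : ℝ) : ℝ :=
  if |x| ≤ δ then Real.sign x * (2 * |x| ^ 2 / δ - |x| ^ 3 / δ ^ 2) else x

/-- The cutoff function `c_{a,b}`. -/
def cfun (a b x : ℝ) : ℝ :=
  if x ≤ a then 0 else if x ≤ b then (1 + Real.sin (π * (x - a) / (b - a) - π / 2)) / 2 else 1

/-- The set `E_{F,S,A}(ω, δ)` (θ is the angle `θ_{F,A}` of the face `F` at `A`). -/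
def Eset (ψ : E3 ≃ᵢ E3) (θ ω δ : ℝ) : Set E3 :=
  ψ.symm '' {p | ∃ y ∈ Icc (0:ℝ) δ, ∃ r ∈ Icc 0 (y * Real.tan (15 * θ / 16)),
    ∃ φ ∈ Icc (-ω) ω, p = Phi y r φ}
/-- The map `h_{F,S,A,δ}`. -/
def hmap (ψ : E3 ≃ᵢ E3) (θ α δ : ℝ) (x : E3) : E3 :=
  let t := (1 / 2) * Real.tan (5 * θ / 8)
  let y := ycoord ψ x
  let r := rcoord ψ x
  let φ := phicoord ψ x
  if x ∈ Eset ψ θ α δ ∧ 0 < y ∧ y < δ ∧ 0 < r ∧ r < 3 * y * t then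
    ψ.symm (Phi y r
      ((1 - cfun (δ / 2) δ y) *
          ((1 - cfun (2 * y * t) (3 * y * t) r) * gfun α φ + cfun (2 * y * t) (3 * y * t) r * φ)
        + cfun (δ / 2) δ y * φ))
  else x

/-- The set `L_{S,A}(δ)` (θ is the angle `θ_A`). -/
def Lset (ψ : E3 ≃ᵢ E3) (θ δ : ℝ) : Set E3 :=
  {x | 0 < ycoord ψ x ∧ ycoord ψ x < δ ∧ 0 < rcoord ψ x ∧
    rcoord ψ x < ycoord ψ x * Real.tan (θ / 3)}

/-- The map `H_{S,A,δ}`. -/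
def Hmap (ψ : E3 ≃ᵢ E3) (θ δ : ℝ) (x : E3) : E3 :=
  let y := ycoord ψ x
  let r := rcoord ψ x
  let φ := phicoord ψ x
  if x ∈ Lset ψ θ δ then
    ψ.symm (Phi y ((1 - cfun (δ / 2) δ y) * gfun (y * Real.tan (θ / 3)) r + cfun (δ / 2) δ y * r) φ)
  else x

/-- The map `G_{A,δ}`. -/
def Gmap (A : E3) (δ : ℝ) (x : E3) : E3 :=
  if x = A then A else A + (gfun δ (dist x A) / dist x A) • (x - A)

/-- The set `D_{F,S}(δ)` (ℓ is `ℓ_S`, θ is `θ_S`, ω is `ω_S`). -/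
def Dset (ψ : E3 ≃ᵢ E3) (ℓ θ ω δ : ℝ) : Set E3 :=
  {x | ∃ y ∈ Icc (δ / 4) (ℓ - δ / 4), ∃ r ∈ Icc 0 ((δ / 4) * Real.tan (θ / 3)),
    ∃ φ ∈ Icc (-(ω / 3)) (ω / 3), x = ψ.symm (Phi y r φ)}

/-- The map `b_{F,S,δ}`. -/
def bmap (ψ : E3 ≃ᵢ E3) (S : Set E3) (ℓ θ ω δ : ℝ) (x : E3) : E3 :=
  let t := Real.tan (θ / 3)
  let y := ycoord ψ x
  let r := rcoord ψ x
  let φ := phicoord ψ x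
  let c1 := cfun (δ / 4) (δ / 2) y - cfun (ℓ - δ / 2) (ℓ - δ / 4) y
  let c2 := cfun (δ * t / 8) (δ * t / 4) r
  if x ∈ Dset ψ ℓ θ ω δ ∧ x ∉ S then
    ψ.symm (Phi y r (c1 * ((1 - c2) * gfun ω φ + c2 * φ) + (1 - c1) * φ))
  else x

/-- The set `W_S(δ)`. -/
def Wset (ψ : E3 ≃ᵢ E3) (ℓ θ δ : ℝ) : Set E3 :=
  {x | ∃ y ∈ Icc (δ / 4) (ℓ - δ / 4), ∃ r ∈ Icc 0 ((δ / 4) * Real.tan (θ / 3)),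
    ∃ φ ∈ Ico (-π) π, x = ψ.symm (Phi y r φ)}

/-- The map `w_{S,δ}`. -/
def wmap (ψ : E3 ≃ᵢ E3) (ℓ θ δ : ℝ) (x : E3) : E3 :=
  let t := Real.tan (θ / 3)
  let y := ycoord ψ x
  let r := rcoord ψ x
  let φ := phicoord ψ x
  let c := cfun (δ / 4) (δ / 2) y - cfun (ℓ - δ / 2) (ℓ - δ / 4) y
  if x ∈ Wset ψ ℓ θ δ then
    ψ.symm (Phi y (c * gfun (δ * t / 4) r + (1 - c) * r) φ)
  else x

/-- The point with coordinates `(p₁(x), p₂(x), 0)`. -/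
def proj12 (ψ : E3 ≃ᵢ E3) (x : E3) : E3 :=
  (EuclideanSpace.equiv (Fin 3) ℝ).symm ![ψ x 0, ψ x 1, 0]

/-- The spec of the cutoff `λ_{F,δ}` (t is `tan(ω_F/3)`). -/
def IsLambda (ψ : E3 ≃ᵢ E3) (F : Set E3) (t δ : ℝ) (lam : E3 → ℝ) : Prop :=
  ContDiff ℝ (⊤ : ℕ∞) lam ∧ (∀ x, lam x ∈ Icc (0:ℝ) 1) ∧
  (∀ x x', ψ x 0 = ψ x' 0 → ψ x 1 = ψ x' 1 → lam x = lam x') ∧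
  (∀ x, Metric.infDist (proj12 ψ x) ({z : E3 | z 2 = 0} \ (ψ '' F)) < t * δ / 32 → lam x = 0) ∧
  (∀ x, t * δ / 16 < Metric.infDist (proj12 ψ x) ({z : E3 | z 2 = 0} \ (ψ '' F)) → lam x = 1)

/-- The set `K_F(δ)`. -/
def Kset (ψ : E3 ≃ᵢ E3) (lam : E3 → ℝ) (t δ : ℝ) : Set E3 :=
  {x | 0 < lam x ∧ |ψ x 2| < (1 / 2) * δ * t * lam x}

/-- The map `s_{F,δ}`. -/
def smap (ψ : E3 ≃ᵢ E3) (lam : E3 → ℝ) (t δ : ℝ) (x : E3) : E3 :=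
  ψ.symm ((EuclideanSpace.equiv (Fin 3) ℝ).symm
    ![ψ x 0, ψ x 1, lam x * gfun (δ * t ^ 2 / 64) (ψ x 2) + (1 - lam x) * (ψ x 2)])


/-! ### Auxiliary lemmas for `statement11` -/

section Aux

open InnerProductGeometry
open scoped InnerProductSpace

variable {VS : Type*} [NormedAddCommGroup VS] [InnerProductSpace ℝ VS]

lemma aux_angle_le_of_cos_le {a τ : ℝ} (ha : 0 ≤ a) (haπ : a ≤ π) (hτ : 0 ≤ τ) (hτπ : τ ≤ π)
    (h : Real.cos τ ≤ Real.cos a) : a ≤ τ := by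
  by_contra h'
  push_neg at h'
  have := Real.strictAntiOn_cos ⟨hτ, hτπ⟩ ⟨ha, haπ⟩ h'
  linarith

lemma aux_cos_add_le_inner (u v w : VS) (hu : ‖u‖ = 1) (hv : ‖v‖ = 1) (hw : ‖w‖ = 1) :
    Real.cos (angle u v + angle v w) ≤ ⟪u, w⟫_ℝ := by
  set c1 : ℝ := ⟪u, v⟫_ℝ with hc1
  set c2 : ℝ := ⟪v, w⟫_ℝ with hc2
  have hcos1 : Real.cos (angle u v) = c1 := by rw [cos_angle, hu, hv]; simp; exact hc1.symm
  have hcos2 : Real.cos (angle v w) = c2 := by rw [cos_angle, hv, hw]; simp; exact hc2.symm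
  set p := u - c1 • v with hp
  set q := w - c2 • v with hq
  have hvv : ⟪v, v⟫_ℝ = 1 := by rw [real_inner_self_eq_norm_sq, hv]; norm_num
  have hp2 : ‖p‖ ^ 2 = 1 - c1 ^ 2 := by
    rw [← real_inner_self_eq_norm_sq, hp]
    simp only [inner_sub_left, inner_sub_right, real_inner_smul_left, real_inner_smul_right, hvv]
    rw [real_inner_self_eq_norm_sq, hu, real_inner_comm u v, ← hc1]
    ring
  have hq2 : ‖q‖ ^ 2 = 1 - c2 ^ 2 := by
    rw [← real_inner_self_eq_norm_sq, hq]
    simp only [inner_sub_left, inner_sub_right, real_inner_smul_left, real_inner_smul_right, hvv]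
    rw [real_inner_self_eq_norm_sq, hw, real_inner_comm v w, ← hc2]
    ring
  have hpq : ⟪p, q⟫_ℝ = ⟪u, w⟫_ℝ - c1 * c2 := by
    rw [hp, hq]
    simp only [inner_sub_left, inner_sub_right, real_inner_smul_left, real_inner_smul_right, hvv]
    rw [← hc1, ← hc2]
    ring
  have hsin1 : Real.sin (angle u v) = Real.sqrt (1 - c1 ^ 2) := by
    rw [Real.sin_eq_sqrt_one_sub_cos_sq (angle_nonneg _ _) (angle_le_pi _ _), hcos1]
  have hsin2 : Real.sin (angle v w) = Real.sqrt (1 - c2 ^ 2) := by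
    rw [Real.sin_eq_sqrt_one_sub_cos_sq (angle_nonneg _ _) (angle_le_pi _ _), hcos2]
  have hnp : ‖p‖ = Real.sqrt (1 - c1 ^ 2) := by
    rw [← hp2, Real.sqrt_sq (norm_nonneg _)]
  have hnq : ‖q‖ = Real.sqrt (1 - c2 ^ 2) := by
    rw [← hq2, Real.sqrt_sq (norm_nonneg _)]
  have hCS : -(‖p‖ * ‖q‖) ≤ ⟪p, q⟫_ℝ := neg_le_of_abs_le (abs_real_inner_le_norm p q)
  rw [Real.cos_add, hcos1, hcos2, hsin1, hsin2, ← hnp, ← hnq]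
  nlinarith [hCS, hpq]

/-- The triangle inequality for angles between vectors. -/
lemma aux_angle_triangle (u v w : VS) : angle u w ≤ angle u v + angle v w := by
  rcases eq_or_ne u 0 with rfl | hu
  · rw [angle_zero_left, angle_zero_left]
    linarith [angle_nonneg v w]
  rcases eq_or_ne w 0 with rfl | hw
  · rw [angle_zero_right, angle_zero_right]
    linarith [angle_nonneg u v]
  rcases eq_or_ne v 0 with rfl | hv
  · rw [angle_zero_right, angle_zero_left]
    linarith [angle_le_pi u w]
  rcases le_or_gt π (angle u v + angle v w) with h | h
  · exact (angle_le_pi u w).trans h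
  have hnu : (0:ℝ) < ‖u‖ := norm_pos_iff.2 hu
  have hnv : (0:ℝ) < ‖v‖ := norm_pos_iff.2 hv
  have hnw : (0:ℝ) < ‖w‖ := norm_pos_iff.2 hw
  set u' := ‖u‖⁻¹ • u with hu'
  set v' := ‖v‖⁻¹ • v with hv'
  set w' := ‖w‖⁻¹ • w with hw'
  have hu1 : ‖u'‖ = 1 := by rw [hu', norm_smul]; simp [abs_of_pos (inv_pos.2 hnu)]; field_simp
  have hv1 : ‖v'‖ = 1 := by rw [hv', norm_smul]; simp [abs_of_pos (inv_pos.2 hnv)]; field_simp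
  have hw1 : ‖w'‖ = 1 := by rw [hw', norm_smul]; simp [abs_of_pos (inv_pos.2 hnw)]; field_simp
  have e1 : angle u' v' = angle u v := by
    rw [hu', hv', angle_smul_left_of_pos _ _ (inv_pos.2 hnu),
      angle_smul_right_of_pos _ _ (inv_pos.2 hnv)]
  have e2 : angle v' w' = angle v w := by
    rw [hv', hw', angle_smul_left_of_pos _ _ (inv_pos.2 hnv),
      angle_smul_right_of_pos _ _ (inv_pos.2 hnw)]
  have e3 : angle u' w' = angle u w := by
    rw [hu', hw', angle_smul_left_of_pos _ _ (inv_pos.2 hnu),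
      angle_smul_right_of_pos _ _ (inv_pos.2 hnw)]
  have key := aux_cos_add_le_inner u' v' w' hu1 hv1 hw1
  have hca : Real.cos (angle u' w') = ⟪u', w'⟫_ℝ := by rw [cos_angle, hu1, hw1]; simp
  rw [← e3, ← e1, ← e2]
  refine aux_angle_le_of_cos_le (angle_nonneg _ _) (angle_le_pi _ _) ?_ ?_ ?_
  · exact add_nonneg (angle_nonneg _ _) (angle_nonneg _ _)
  · exact le_of_lt (by rw [e1, e2]; exact h)
  · rw [hca]; exact key

/-- Wedge bound: a vector whose component along `u` is `y` and whose orthogonal part has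
size `r ≤ y tan τ` makes an angle at most `τ` with `u`. -/
lemma aux_angle_le_of_wedge (u w : VS) {ℓ y r τ : ℝ} (hu : ‖u‖ = ℓ) (hℓ : 0 < ℓ) (hy : 0 < y)
    (hiw : ⟪u, w⟫_ℝ = y * ℓ) (hw2 : ‖w‖ ^ 2 = y ^ 2 + r ^ 2) (hr : 0 ≤ r)
    (hrt : r ≤ y * Real.tan τ) (hτ0 : 0 ≤ τ) (hτ : τ < π / 2) : angle u w ≤ τ := by
  have hcosτ : 0 < Real.cos τ := Real.cos_pos_of_mem_Ioo ⟨by linarith [Real.pi_pos], hτ⟩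
  have hwpos : 0 < ‖w‖ := by nlinarith [norm_nonneg w]
  have hsinτ : 0 ≤ Real.sin τ := Real.sin_nonneg_of_nonneg_of_le_pi hτ0 (by linarith [Real.pi_pos])
  have hsc : Real.sin τ ^ 2 + Real.cos τ ^ 2 = 1 := Real.sin_sq_add_cos_sq τ
  have htan : Real.sin τ = Real.tan τ * Real.cos τ := by
    rw [Real.tan_eq_sin_div_cos]
    field_simp
  have hrc : r * Real.cos τ ≤ y * Real.sin τ := by
    calc r * Real.cos τ ≤ (y * Real.tan τ) * Real.cos τ := by
          exact mul_le_mul_of_nonneg_right hrt (le_of_lt hcosτ)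
      _ = y * Real.sin τ := by rw [htan]; ring
  have h1 : (Real.cos τ) ^ 2 * ‖w‖ ^ 2 ≤ y ^ 2 := by
    rw [hw2]
    nlinarith [mul_nonneg hr (le_of_lt hcosτ), mul_nonneg (le_of_lt hy) hsinτ]
  have hkey : Real.cos τ * ‖w‖ ≤ y := by
    nlinarith [mul_pos hcosτ hwpos]
  have hcosangle : Real.cos (angle u w) = y / ‖w‖ := by
    rw [cos_angle, hiw, hu]
    field_simp
  refine aux_angle_le_of_cos_le (angle_nonneg _ _) (angle_le_pi _ _) hτ0
    (by linarith [Real.pi_pos]) ?_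
  rw [hcosangle, le_div_iff₀ hwpos]
  linarith

lemma aux_inner_from_dists {Vv C x : E3} {y r ℓ : ℝ} (hd : dist Vv C = ℓ)
    (h1 : dist x Vv ^ 2 = y ^ 2 + r ^ 2) (h2 : dist x C ^ 2 = (ℓ - y) ^ 2 + r ^ 2) :
    ⟪C - Vv, x - Vv⟫_ℝ = y * ℓ ∧ ‖x - Vv‖ ^ 2 = y ^ 2 + r ^ 2 := by
  have e1 : ‖C - Vv‖ = ℓ := by rw [← dist_eq_norm, dist_comm]; exact hd
  have e2 : ‖x - Vv‖ ^ 2 = y ^ 2 + r ^ 2 := by rw [← dist_eq_norm]; exact h1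
  have e3 : ‖(C - Vv) - (x - Vv)‖ ^ 2 = (ℓ - y) ^ 2 + r ^ 2 := by
    have : (C - Vv) - (x - Vv) = C - x := by abel
    rw [this, ← dist_eq_norm, dist_comm]
    exact h2
  have e1' : ‖C - Vv‖ ^ 2 = ℓ ^ 2 := by rw [e1]
  have hns := norm_sub_sq_real (C - Vv) (x - Vv)
  refine ⟨?_, e2⟩
  nlinarith [hns, e1', e2, e3]

end Aux

section Aux2

open InnerProductGeometry
open scoped InnerProductSpace

def pt3 (a b c : ℝ) : E3 := (EuclideanSpace.equiv (Fin 3) ℝ).symm ![a, b, c]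

@[simp] lemma pt3_0 (a b c : ℝ) : pt3 a b c 0 = a := rfl
@[simp] lemma pt3_1 (a b c : ℝ) : pt3 a b c 1 = b := rfl
@[simp] lemma pt3_2 (a b c : ℝ) : pt3 a b c 2 = c := rfl

lemma Phi_eq_pt3 (y r φ : ℝ) : Phi y r φ = pt3 y (r * Real.cos φ) (r * Real.sin φ) := rfl

lemma zero_pt3 : (0 : E3) = pt3 0 0 0 := by
  ext i
  fin_cases i <;> rfl

lemma eq_pt3 (z : E3) : z = pt3 (z 0) (z 1) (z 2) := by
  ext i
  fin_cases i <;> rfl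

lemma dist_pt3 (a b c a' b' c' : ℝ) :
    dist (pt3 a b c) (pt3 a' b' c') = Real.sqrt ((a - a')^2 + ((b - b')^2 + (c - c')^2)) := by
  rw [EuclideanSpace.dist_eq, Fin.sum_univ_three]
  simp [Real.dist_eq, sq_abs, add_assoc]

lemma dist_Phi_axis (y r φ d : ℝ) (hr : 0 ≤ r) :
    dist (Phi y r φ) (pt3 d 0 0) = Real.sqrt ((y - d)^2 + r^2) := by
  rw [Phi_eq_pt3, dist_pt3]
  congr 1
  have := Real.sin_sq_add_cos_sq φ
  nlinarith

lemma IsSideWith.ends_ne {𝒯 : SC3 Ω} {A A' : E3} {S : Set E3} (h : IsSideWith 𝒯 A A' S) :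
    A ≠ A' := by
  obtain ⟨v, hv, i, j, hij, hA, hA', _⟩ := h
  rw [hA, hA']
  exact fun hh => hij (hv.1.injective hh)

lemma IsSideWith.seg {𝒯 : SC3 Ω} {A A' : E3} {S : Set E3} (h : IsSideWith 𝒯 A A' S) :
    S = segment ℝ A A' := by
  obtain ⟨v, hv, i, j, hij, hA, hA', hS⟩ := h
  exact hS

lemma IsSideWith.symm {𝒯 : SC3 Ω} {A A' : E3} {S : Set E3} (h : IsSideWith 𝒯 A A' S) :
    IsSideWith 𝒯 A' A S := by
  obtain ⟨v, hv, i, j, hij, hA, hA', hS⟩ := h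
  exact ⟨v, hv, j, i, hij.symm, hA', hA, by rw [hS, segment_symm]⟩

lemma thetaA_nonneg (𝒯 : SC3 Ω) (A : E3) : 0 ≤ thetaA 𝒯 A := by
  apply Real.sInf_nonneg
  rintro θ (h | ⟨B, B', S1, S2, _, _, _, rfl⟩)
  · simp only [mem_singleton_iff] at h
    rw [h]
    positivity
  · exact EuclideanGeometry.angle_nonneg _ _ _

lemma thetaA_le_angle {𝒯 : SC3 Ω} {A C C' : E3} {S S' : Set E3} (h1 : IsSideWith 𝒯 A C S)
    (h2 : IsSideWith 𝒯 A C' S') (hne : S ≠ S') :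
    thetaA 𝒯 A ≤ EuclideanGeometry.angle C A C' := by
  apply csInf_le
  · refine ⟨0, ?_⟩
    rintro θ (h | ⟨B, B', S1, S2, _, _, _, rfl⟩)
    · simp only [mem_singleton_iff] at h
      rw [h]
      positivity
    · exact EuclideanGeometry.angle_nonneg _ _ _
  · exact Or.inr ⟨C, C', S, S', h1, h2, hne, rfl⟩

lemma thetaS_nonneg (𝒯 : SC3 Ω) (A A' : E3) : 0 ≤ thetaS 𝒯 A A' := by
  refine le_min (le_min (thetaA_nonneg _ _) (thetaA_nonneg _ _)) (by positivity)

lemma thetaS_le_pi_div_four (𝒯 : SC3 Ω) (A A' : E3) : thetaS 𝒯 A A' ≤ π / 4 :=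
  min_le_right _ _

lemma thetaS_le_thetaA_left (𝒯 : SC3 Ω) (A A' : E3) : thetaS 𝒯 A A' ≤ thetaA 𝒯 A :=
  le_trans (min_le_left _ _) (min_le_left _ _)

lemma thetaS_le_thetaA_right (𝒯 : SC3 Ω) (A A' : E3) : thetaS 𝒯 A A' ≤ thetaA 𝒯 A' :=
  le_trans (min_le_left _ _) (min_le_right _ _)

lemma tan_third_nonneg {θ : ℝ} (h0 : 0 ≤ θ) (h4 : θ ≤ π / 4) : 0 ≤ Real.tan (θ / 3) :=
  Real.tan_nonneg_of_nonneg_of_le_pi_div_two (by linarith) (by linarith [Real.pi_pos])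

lemma tan_third_lt_one {θ : ℝ} (h0 : 0 ≤ θ) (h4 : θ ≤ π / 4) : Real.tan (θ / 3) < 1 := by
  have := Real.tan_lt_tan_of_nonneg_of_lt_pi_div_two (by linarith : (0:ℝ) ≤ θ / 3)
    (by linarith [Real.pi_pos] : π / 4 < π / 2) (by linarith [Real.pi_pos] : θ / 3 < π / 4)
  rwa [Real.tan_pi_div_four] at this

lemma TS_comm (𝒯 : SC3 Ω) (A A' : E3) : TS 𝒯 A A' = TS 𝒯 A' A := by
  have hfam : {S' | ∃ B B', IsSideWith 𝒯 B B' S' ∧ B ≠ A ∧ B ≠ A' ∧ B' ≠ A ∧ B' ≠ A'} =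
      {S' | ∃ B B', IsSideWith 𝒯 B B' S' ∧ B ≠ A' ∧ B ≠ A ∧ B' ≠ A' ∧ B' ≠ A} := by
    ext S0
    constructor
    · rintro ⟨B, B', h1, h2, h3, h4, h5⟩
      exact ⟨B, B', h1, h3, h2, h5, h4⟩
    · rintro ⟨B, B', h1, h2, h3, h4, h5⟩
      exact ⟨B, B', h1, h3, h2, h5, h4⟩
  rw [TS, TS, hfam]

lemma setDist_nonpos_of_common {S T0 : Set E3} {𝒯 : SC3 Ω} {A A' C : E3}
    (hCS : C ∈ S) (hCT : C ∈ T0)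
    (hT : T0 ∈ {S' | ∃ B B', IsSideWith 𝒯 B B' S' ∧ B ≠ A ∧ B ≠ A' ∧ B' ≠ A ∧ B' ≠ A'}) :
    setDist S (TS 𝒯 A A') ≤ 0 := by
  apply csInf_le
  · refine ⟨0, ?_⟩
    rintro d ⟨x, _, y, _, rfl⟩
    exact dist_nonneg
  · exact ⟨C, hCS, C, ⟨T0, hT, hCT⟩, (dist_self C).symm⟩

lemma setDist_le_dist {S : Set E3} {𝒯 : SC3 Ω} {A A' : E3} {p p' : E3}
    (hp : p ∈ S) (hp' : p' ∈ TS 𝒯 A A') :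
    setDist S (TS 𝒯 A A') ≤ dist p p' := by
  apply csInf_le
  · refine ⟨0, ?_⟩
    rintro d ⟨x, _, y, _, rfl⟩
    exact dist_nonneg
  · exact ⟨p, hp, p', hp', rfl⟩

lemma exists_other_side {𝒯 : SC3 Ω} {Vv C : E3} {S : Set E3} (h : IsSideWith 𝒯 Vv C S)
    (Z : E3) :
    ∃ D, D ≠ Vv ∧ D ≠ Z ∧ D ≠ C ∧ IsSideWith 𝒯 C D (segment ℝ C D) := by
  obtain ⟨v, hv, i, j, hij, hVi, hCj, hSeq⟩ := h
  have hinj := hv.1.injective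
  have hcard : 1 < (({i, j}ᶜ : Finset (Fin 4))).card := by
    rw [Finset.card_compl]
    have h2 : ({i, j} : Finset (Fin 4)).card = 2 := by
      rw [Finset.card_insert_of_notMem (by simp [hij]), Finset.card_singleton]
    simp [h2]
  obtain ⟨k, hk, l, hl, hkl⟩ := Finset.one_lt_card.mp hcard
  simp only [Finset.mem_compl, Finset.mem_insert, Finset.mem_singleton, not_or] at hk hl
  by_cases hvk : v k = Z
  · refine ⟨v l, ?_, ?_, ?_, ⟨v, hv, j, l, fun hh => hl.2 hh.symm, hCj, rfl, rfl⟩⟩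
    · rw [hVi]; exact fun hh => hl.1 (hinj hh)
    · rw [← hvk]; exact fun hh => hkl (hinj hh).symm
    · rw [hCj]; exact fun hh => hl.2 (hinj hh)
  · refine ⟨v k, ?_, hvk, ?_, ⟨v, hv, j, k, fun hh => hk.2 hh.symm, hCj, rfl, rfl⟩⟩
    · rw [hVi]; exact fun hh => hk.1 (hinj hh)
    · rw [hCj]; exact fun hh => hk.2 (hinj hh)

end Aux2

section Aux3

open InnerProductGeometry
open scoped InnerProductSpace

/-- Main structural facts about points of `Wset`. -/
lemma Wfacts {𝒯 : SC3 Ω} {A A' : E3} {S F : Set E3} (hS : IsSideWith 𝒯 A A' S)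
    {ψ : E3 ≃ᵢ E3} (hψ : IsPsi A S F ψ) {θ δ : ℝ} (hδ : 0 < δ) {x : E3}
    (hx : x ∈ Wset ψ (dist A A') θ δ) :
    ∃ y r : ℝ, δ / 4 ≤ y ∧ y + δ / 4 ≤ dist A A' ∧ 0 ≤ r ∧ r ≤ δ / 4 * Real.tan (θ / 3) ∧
      ∃ p ∈ S, dist x p = r ∧ dist x A ^ 2 = y ^ 2 + r ^ 2 ∧
        dist x A' ^ 2 = (dist A A' - y) ^ 2 + r ^ 2 ∧
        ∃ a : ℝ, 0 < a ∧ a < 1 ∧ p = A + a • (A' - A) := by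
  obtain ⟨y, hy, r, hr, φ, hφ, hxe⟩ := hx
  set ℓ := dist A A' with hℓdef
  have hAA' : A ≠ A' := hS.ends_ne
  have hℓpos : 0 < ℓ := dist_pos.2 hAA'
  have hSseg : S = segment ℝ A A' := hS.seg
  have hAS : A ∈ S := by rw [hSseg]; exact left_mem_segment ℝ A A'
  have hA'S : A' ∈ S := by rw [hSseg]; exact right_mem_segment ℝ A A'
  have hψA : ψ A = 0 := hψ.1
  obtain ⟨hc1, hc2, hc0⟩ := hψ.2.1 A' hA'S
  have hψA' : ψ A' = pt3 ℓ 0 0 := by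
    have hd : dist (ψ A') (ψ A) = ℓ := by rw [ψ.dist_eq]; exact dist_comm A' A
    rw [hψA, zero_pt3] at hd
    rw [eq_pt3 (ψ A'), hc1, hc2] at hd ⊢
    rw [dist_pt3] at hd
    have : |ψ A' 0| = ℓ := by
      rw [← hd]
      rw [show (ψ A' 0 - 0)^2 + ((0-(0:ℝ))^2 + (0-(0:ℝ))^2) = (ψ A' 0)^2 by ring]
      exact (Real.sqrt_sq_eq_abs _).symm
    rw [abs_of_nonneg hc0] at this
    rw [this]
  have hψx : ψ x = Phi y r φ := by rw [hxe]; exact ψ.apply_symm_apply _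
  set p := ψ.symm (pt3 y 0 0) with hpdef
  have hψp : ψ p = pt3 y 0 0 := ψ.apply_symm_apply _
  have hy1 : δ / 4 ≤ y := hy.1
  have hy2 : y ≤ ℓ - δ / 4 := hy.2
  have hr0 : 0 ≤ r := hr.1
  have hypos : 0 < y := lt_of_lt_of_le (by linarith) hy1
  have hyℓ : y < ℓ := by linarith
  -- distances
  have hdxp : dist x p = r := by
    rw [← ψ.dist_eq, hψx, hψp, dist_Phi_axis _ _ _ _ hr0]
    rw [show (y - y)^2 + r^2 = r^2 by ring, Real.sqrt_sq hr0]
  have hdxA : dist x A ^ 2 = y ^ 2 + r ^ 2 := by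
    rw [← ψ.dist_eq, hψx, hψA, zero_pt3, dist_Phi_axis _ _ _ _ hr0]
    rw [Real.sq_sqrt (by positivity)]
    ring
  have hdxA' : dist x A' ^ 2 = (ℓ - y) ^ 2 + r ^ 2 := by
    rw [← ψ.dist_eq, hψx, hψA', dist_Phi_axis _ _ _ _ hr0]
    rw [Real.sq_sqrt (by positivity)]
    ring
  have hdAp : dist A p = y := by
    rw [← ψ.dist_eq, hψA, hψp, zero_pt3, dist_pt3]
    rw [show (0 - y)^2 + ((0-(0:ℝ))^2 + (0-(0:ℝ))^2) = y^2 by ring, Real.sqrt_sq hypos.le]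
  have hdA'p : dist A' p = ℓ - y := by
    rw [← ψ.dist_eq, hψA', hψp, dist_pt3]
    rw [show (ℓ - y)^2 + ((0-(0:ℝ))^2 + (0-(0:ℝ))^2) = (ℓ - y)^2 by ring,
      Real.sqrt_sq (by linarith)]
  -- p lies on the segment
  have hwb : Wbtw ℝ A p A' := by
    rw [← dist_add_dist_eq_iff]
    rw [hdAp, dist_comm p A', hdA'p]
    ring
  have hpS : p ∈ S := by rw [hSseg]; exact mem_segment_iff_wbtw.2 hwb
  have hpseg : p ∈ segment ℝ A A' := by rw [← hSseg]; exact hpS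
  rw [segment_eq_image'] at hpseg
  obtain ⟨t, ht, htp⟩ := hpseg
  have hdApt : dist A p = |t| * ℓ := by
    rw [← htp, dist_comm, dist_eq_norm, add_sub_cancel_left, norm_smul, Real.norm_eq_abs,
      ← dist_eq_norm, dist_comm A' A]
  have habs : |t| * ℓ = y := by rw [← hdApt, hdAp]
  have ht0 : 0 < t := by
    rcases lt_or_eq_of_le ht.1 with h | h
    · exact h
    · exfalso
      rw [← h] at habs
      simp at habs
      linarith
  have htabs : |t| = t := abs_of_pos ht0
  have ht1 : t < 1 := by
    rw [htabs] at habs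
    nlinarith
  exact ⟨y, r, hy1, by linarith, hr0, hr.2, p, hpS, hdxp, hdxA, hdxA', t, ht0, ht1, htp.symm⟩

end Aux3

section Aux4

open InnerProductGeometry
open scoped InnerProductSpace

lemma Wfacts_orient {A A' x p : E3} {ℓ y r : ℝ} (hℓ : ℓ = dist A A')
    (hdxp : dist x p = r) (hdxA : dist x A ^ 2 = y ^ 2 + r ^ 2)
    (hdxA' : dist x A' ^ 2 = (ℓ - y) ^ 2 + r ^ 2)
    {a : ℝ} (ha0 : 0 < a) (ha1 : a < 1) (hpa : p = A + a • (A' - A)) :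
    (⟪A' - A, x - A⟫_ℝ = y * dist A A' ∧ ‖x - A‖ ^ 2 = y ^ 2 + r ^ 2 ∧
      (r = 0 → ∃ b : ℝ, 0 < b ∧ b < 1 ∧ x = A + b • (A' - A))) ∧
    (⟪A - A', x - A'⟫_ℝ = (ℓ - y) * dist A' A ∧ ‖x - A'‖ ^ 2 = (ℓ - y) ^ 2 + r ^ 2 ∧
      (r = 0 → ∃ b : ℝ, 0 < b ∧ b < 1 ∧ x = A' + b • (A - A'))) := by
  have hd1 : dist A A' = ℓ := hℓ.symm
  have hd2 : dist A' A = ℓ := by rw [dist_comm]; exact hℓ.symm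
  have hfst := aux_inner_from_dists hd1 hdxA hdxA'
  have hdxA2 : dist x A ^ 2 = (ℓ - (ℓ - y)) ^ 2 + r ^ 2 := by
    rw [show ℓ - (ℓ - y) = y by ring]; exact hdxA
  have hsnd := aux_inner_from_dists hd2 hdxA' hdxA2
  have hxp : r = 0 → x = p := by
    intro hr
    rw [← dist_eq_zero, hdxp]
    exact hr
  refine ⟨⟨by rw [hfst.1, hd1], hfst.2, ?_⟩, ⟨by rw [hsnd.1, hd2], hsnd.2, ?_⟩⟩
  · intro hr
    exact ⟨a, ha0, ha1, by rw [hxp hr, hpa]⟩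
  · intro hr
    refine ⟨1 - a, by linarith, by linarith, ?_⟩
    rw [hxp hr, hpa]
    module

lemma shared_contra {𝒯 : SC3 Ω} {Vv C C' x : E3} {S S' : Set E3}
    (hS : IsSideWith 𝒯 Vv C S) (hS' : IsSideWith 𝒯 Vv C' S')
    (hCC' : C ≠ C') (hSS' : S ≠ S')
    {θ θ' y y' r r' : ℝ}
    (hθ0 : 0 ≤ θ) (hθA : θ ≤ thetaA 𝒯 Vv) (hθ4 : θ ≤ π / 4)
    (hθ'0 : 0 ≤ θ') (hθ'A : θ' ≤ thetaA 𝒯 Vv) (hθ'4 : θ' ≤ π / 4)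
    (hy : 0 < y) (hy' : 0 < y')
    (hi : ⟪C - Vv, x - Vv⟫_ℝ = y * dist Vv C) (hn : ‖x - Vv‖ ^ 2 = y ^ 2 + r ^ 2)
    (hr0 : 0 ≤ r) (hrb : r ≤ y * Real.tan (θ / 3))
    (hcol : r = 0 → ∃ a : ℝ, 0 < a ∧ a < 1 ∧ x = Vv + a • (C - Vv))
    (hi' : ⟪C' - Vv, x - Vv⟫_ℝ = y' * dist Vv C') (hn' : ‖x - Vv‖ ^ 2 = y' ^ 2 + r' ^ 2)
    (hr'0 : 0 ≤ r') (hrb' : r' ≤ y' * Real.tan (θ' / 3))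
    (hcol' : r' = 0 → ∃ a : ℝ, 0 < a ∧ a < 1 ∧ x = Vv + a • (C' - Vv))
    (hpos : 0 < setDist S (TS 𝒯 Vv C)) (hpos' : 0 < setDist S' (TS 𝒯 Vv C')) : False := by
  have hVC : Vv ≠ C := hS.ends_ne
  have hVC' : Vv ≠ C' := hS'.ends_ne
  have hdC : 0 < dist Vv C := dist_pos.2 hVC
  have hdC' : 0 < dist Vv C' := dist_pos.2 hVC'
  have hnC : ‖C - Vv‖ = dist Vv C := by rw [← dist_eq_norm, dist_comm]
  have hnC' : ‖C' - Vv‖ = dist Vv C' := by rw [← dist_eq_norm, dist_comm]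
  have a1 : angle (C - Vv) (x - Vv) ≤ θ / 3 :=
    aux_angle_le_of_wedge _ _ hnC hdC hy hi hn hr0 hrb (by linarith)
      (by linarith [Real.pi_pos])
  have a2 : angle (C' - Vv) (x - Vv) ≤ θ' / 3 :=
    aux_angle_le_of_wedge _ _ hnC' hdC' hy' hi' hn' hr'0 hrb' (by linarith)
      (by linarith [Real.pi_pos])
  have tri : angle (C - Vv) (C' - Vv) ≤
      angle (C - Vv) (x - Vv) + angle (x - Vv) (C' - Vv) := aux_angle_triangle _ _ _
  have hcm : angle (x - Vv) (C' - Vv) = angle (C' - Vv) (x - Vv) := angle_comm _ _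
  have hAle : thetaA 𝒯 Vv ≤ EuclideanGeometry.angle C Vv C' := thetaA_le_angle hS hS' hSS'
  have heq : EuclideanGeometry.angle C Vv C' = angle (C - Vv) (C' - Vv) := by
    rw [EuclideanGeometry.angle, vsub_eq_sub, vsub_eq_sub]
  have hTA0 : thetaA 𝒯 Vv = 0 := by
    have h1 : thetaA 𝒯 Vv ≤ θ / 3 + θ' / 3 := by
      rw [heq] at hAle
      linarith
    have := thetaA_nonneg 𝒯 Vv
    linarith
  have hθz : θ = 0 := le_antisymm (by linarith) hθ0
  have hθ'z : θ' = 0 := le_antisymm (by linarith) hθ'0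
  have htz : Real.tan (θ / 3) = 0 := by rw [hθz]; norm_num
  have htz' : Real.tan (θ' / 3) = 0 := by rw [hθ'z]; norm_num
  have hrz : r = 0 := le_antisymm (by rw [htz] at hrb; linarith) hr0
  have hr'z : r' = 0 := le_antisymm (by rw [htz'] at hrb'; linarith) hr'0
  obtain ⟨a, ha0, ha1, hxa⟩ := hcol hrz
  obtain ⟨a', ha'0, ha'1, hxa'⟩ := hcol' hr'z
  have key : a • (C - Vv) = a' • (C' - Vv) := add_left_cancel (hxa.symm.trans hxa')
  have hrep : C - Vv = (a⁻¹ * a') • (C' - Vv) := by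
    rw [← smul_smul, ← key, inv_smul_smul₀ (ne_of_gt ha0)]
  set ρ := a⁻¹ * a' with hρdef
  have hρ : 0 < ρ := by positivity
  rcases le_or_gt ρ 1 with hle | hgt
  · have hCmem : C ∈ S' := by
      rw [hS'.seg, segment_eq_image']
      refine ⟨ρ, ⟨hρ.le, hle⟩, ?_⟩
      show Vv + ρ • (C' - Vv) = C
      rw [← hrep]
      abel
    obtain ⟨D, hD1, hD2, hD3, hDside⟩ := exists_other_side hS C'
    exact absurd hpos' (not_lt.2 (setDist_nonpos_of_common hCmem
      (left_mem_segment ℝ C D) ⟨C, D, hDside, hVC.symm, hCC', hD1, hD2⟩))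
  · have hrep' : C' - Vv = ρ⁻¹ • (C - Vv) := by
      rw [hrep, inv_smul_smul₀ (ne_of_gt hρ)]
    have hC'mem : C' ∈ S := by
      rw [hS.seg, segment_eq_image']
      refine ⟨ρ⁻¹, ⟨by positivity, ?_⟩, ?_⟩
      · rw [inv_le_one_iff₀]
        right
        exact hgt.le
      · show Vv + ρ⁻¹ • (C - Vv) = C'
        rw [← hrep']
        abel
    obtain ⟨D, hD1, hD2, hD3, hDside⟩ := exists_other_side hS' C
    exact absurd hpos (not_lt.2 (setDist_nonpos_of_common hC'mem
      (left_mem_segment ℝ C' D) ⟨C', D, hDside, hVC'.symm, hCC'.symm, hD1, hD2⟩))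

end Aux4
set_option maxHeartbeats 1000000 in
theorem statement11 (Ω : Set E3) (𝒯 : SC3 Ω)
    (A A' P : E3) (S F : Set E3)
    (hS : IsSideWith 𝒯 A A' S) (hF : IsFaceWith 𝒯 A A' P F)
    (ψ : E3 ≃ᵢ E3) (hψ : IsPsi A S F ψ)
    (δ : ℝ) (hδ : 0 < δ) (hδS : δ < dS 𝒯 A A' S)
    (B B' Q : E3) (S' F' : Set E3)
    (hS' : IsSideWith 𝒯 B B' S') (hF' : IsFaceWith 𝒯 B B' Q F')
    (ψ' : E3 ≃ᵢ E3) (hψ' : IsPsi B S' F' ψ')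
    (δ' : ℝ) (hδ' : 0 < δ') (hδ'S : δ' < dS 𝒯 B B' S') :
    (S = S' ∨
      Wset ψ (dist A A') (thetaS 𝒯 A A') δ ∩ Wset ψ' (dist B B') (thetaS 𝒯 B B') δ' = ∅) ∧
    Wset ψ (dist A A') (thetaS 𝒯 A A') δ ⊆ Metric.thickening (δ / 4) S := by
  have hθ0 : 0 ≤ thetaS 𝒯 A A' := thetaS_nonneg 𝒯 A A'
  have hθ4 : thetaS 𝒯 A A' ≤ π / 4 := thetaS_le_pi_div_four 𝒯 A A'
  have hθ'0 : 0 ≤ thetaS 𝒯 B B' := thetaS_nonneg 𝒯 B B'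
  have hθ'4 : thetaS 𝒯 B B' ≤ π / 4 := thetaS_le_pi_div_four 𝒯 B B'
  have htanlt : Real.tan (thetaS 𝒯 A A' / 3) < 1 := tan_third_lt_one hθ0 hθ4
  have htanlt' : Real.tan (thetaS 𝒯 B B' / 3) < 1 := tan_third_lt_one hθ'0 hθ'4
  have htannn : 0 ≤ Real.tan (thetaS 𝒯 A A' / 3) := tan_third_nonneg hθ0 hθ4
  have htannn' : 0 ≤ Real.tan (thetaS 𝒯 B B' / 3) := tan_third_nonneg hθ'0 hθ'4
  have hposA : 0 < setDist S (TS 𝒯 A A') :=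
    lt_of_lt_of_le hδ (le_trans hδS.le (min_le_right _ _))
  have hposB : 0 < setDist S' (TS 𝒯 B B') :=
    lt_of_lt_of_le hδ' (le_trans hδ'S.le (min_le_right _ _))
  constructor
  · by_cases hSS' : S = S'
    · exact Or.inl hSS'
    refine Or.inr (eq_empty_iff_forall_notMem.2 ?_)
    rintro x ⟨hx, hx'⟩
    obtain ⟨y, r, hy1, hy2, hr0, hrb, p, hpS, hdxp, hdxA, hdxA', a, ha0, ha1, hpa⟩ :=
      Wfacts hS hψ hδ hx
    obtain ⟨y', r', hy1', hy2', hr'0, hrb', p', hp'S, hdxp', hdxB, hdxB', a', ha'0, ha'1, hpa'⟩ :=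
      Wfacts hS' hψ' hδ' hx'
    have horA := Wfacts_orient rfl hdxp hdxA hdxA' ha0 ha1 hpa
    have horB := Wfacts_orient rfl hdxp' hdxB hdxB' ha'0 ha'1 hpa'
    have hypos : 0 < y := by linarith
    have hy2pos : 0 < dist A A' - y := by linarith
    have hy'pos : 0 < y' := by linarith
    have hy2'pos : 0 < dist B B' - y' := by linarith
    have hrb1 : r ≤ y * Real.tan (thetaS 𝒯 A A' / 3) :=
      le_trans hrb (mul_le_mul_of_nonneg_right hy1 htannn)
    have hrb2 : r ≤ (dist A A' - y) * Real.tan (thetaS 𝒯 A A' / 3) :=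
      le_trans hrb (mul_le_mul_of_nonneg_right (by linarith) htannn)
    have hrb1' : r' ≤ y' * Real.tan (thetaS 𝒯 B B' / 3) :=
      le_trans hrb' (mul_le_mul_of_nonneg_right hy1' htannn')
    have hrb2' : r' ≤ (dist B B' - y') * Real.tan (thetaS 𝒯 B B' / 3) :=
      le_trans hrb' (mul_le_mul_of_nonneg_right (by linarith) htannn')
    by_cases h1 : A = B
    · by_cases h4 : A' = B'
      · exact hSS' (by rw [hS.seg, hS'.seg, h1, h4])
      · subst h1
        exact shared_contra hS hS' h4 hSS' hθ0 (thetaS_le_thetaA_left 𝒯 A A') hθ4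
          hθ'0 (thetaS_le_thetaA_left 𝒯 A B') hθ'4 hypos hy'pos
          horA.1.1 horA.1.2.1 hr0 hrb1 horA.1.2.2
          horB.1.1 horB.1.2.1 hr'0 hrb1' horB.1.2.2 hposA hposB
    · by_cases h2 : A = B'
      · by_cases h3 : A' = B
        · refine absurd ?_ hSS'
          rw [hS.seg, hS'.seg, ← h2, ← h3]
          exact segment_symm ℝ A A'
        · subst h2
          rw [TS_comm 𝒯 B A] at hposB
          exact shared_contra hS hS'.symm h3 hSS' hθ0 (thetaS_le_thetaA_left 𝒯 A A') hθ4
            hθ'0 (thetaS_le_thetaA_right 𝒯 B A) hθ'4 hypos hy2'pos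
            horA.1.1 horA.1.2.1 hr0 hrb1 horA.1.2.2
            horB.2.1 horB.2.2.1 hr'0 hrb2' horB.2.2.2 hposA hposB
      · by_cases h3 : A' = B
        · subst h3
          rw [TS_comm 𝒯 A A'] at hposA
          exact shared_contra hS.symm hS' h2 hSS' hθ0 (thetaS_le_thetaA_right 𝒯 A A') hθ4
            hθ'0 (thetaS_le_thetaA_left 𝒯 A' B') hθ'4 hy2pos hy'pos
            horA.2.1 horA.2.2.1 hr0 hrb2 horA.2.2.2
            horB.1.1 horB.1.2.1 hr'0 hrb1' horB.1.2.2 hposA hposB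
        · by_cases h4 : A' = B'
          · subst h4
            rw [TS_comm 𝒯 A A'] at hposA
            rw [TS_comm 𝒯 B A'] at hposB
            exact shared_contra hS.symm hS'.symm h1 hSS' hθ0
              (thetaS_le_thetaA_right 𝒯 A A') hθ4
              hθ'0 (thetaS_le_thetaA_right 𝒯 B A') hθ'4 hy2pos hy2'pos
              horA.2.1 horA.2.2.1 hr0 hrb2 horA.2.2.2
              horB.2.1 horB.2.2.1 hr'0 hrb2' horB.2.2.2 hposA hposB
          · -- no shared endpoint
            have hpx : dist p x = r := by rw [dist_comm]; exact hdxp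
            have htr : dist p p' ≤ r + r' := by
              calc dist p p' ≤ dist p x + dist x p' := dist_triangle p x p'
                _ = r + r' := by rw [hpx, hdxp']
            have hp'TS : p' ∈ TS 𝒯 A A' :=
              ⟨S', ⟨B, B', hS', fun e => h1 e.symm, fun e => h3 e.symm,
                fun e => h2 e.symm, fun e => h4 e.symm⟩, hp'S⟩
            have hpTS : p ∈ TS 𝒯 B B' := ⟨S, ⟨A, A', hS, h1, h2, h3, h4⟩, hpS⟩
            have d1 : setDist S (TS 𝒯 A A') ≤ dist p p' := setDist_le_dist hpS hp'TS
            have d2 : setDist S' (TS 𝒯 B B') ≤ dist p' p := setDist_le_dist hp'S hpTS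
            have hdS1 : dS 𝒯 A A' S ≤ setDist S (TS 𝒯 A A') := min_le_right _ _
            have hdS2 : dS 𝒯 B B' S' ≤ setDist S' (TS 𝒯 B B') := min_le_right _ _
            have hpp' : dist p' p = dist p p' := dist_comm p' p
            have ht1 : δ / 4 * Real.tan (thetaS 𝒯 A A' / 3) ≤ δ / 4 * 1 :=
              mul_le_mul_of_nonneg_left htanlt.le (by linarith)
            have ht2 : δ' / 4 * Real.tan (thetaS 𝒯 B B' / 3) ≤ δ' / 4 * 1 :=
              mul_le_mul_of_nonneg_left htanlt'.le (by linarith)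
            have hr4 : r ≤ δ / 4 := by linarith
            have hr4' : r' ≤ δ' / 4 := by linarith
            linarith
  · intro x hx
    obtain ⟨y, r, hy1, hy2, hr0, hrb, p, hpS, hdxp, hdxA, hdxA', a, ha0, ha1, hpa⟩ :=
      Wfacts hS hψ hδ hx
    refine Metric.mem_thickening_iff.2 ⟨p, hpS, ?_⟩
    rw [hdxp]
    have ht1 : δ / 4 * Real.tan (thetaS 𝒯 A A' / 3) < δ / 4 * 1 :=
      mul_lt_mul_of_pos_left htanlt (by linarith)
    linarith
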